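/- arXiv:2305.09862 — 4 statements merged into one kernel-verified Lean document; each statement's English description precedes it below -/
import Mathlib

section
/- For all integers r ≥ 0 and j ≥ 0, the identity g_{r+3·2^j} = w₂^{2^j}·g_{r+2^j} + w₃^{2^j}·g_r holds in R. -/
open MvPolynomial Finset

noncomputable section

/-- `R2 = (ℤ/2)[w₂, w₃]`, the polynomial ring in two variables over `ℤ/2ℤ`. -/
abbrev R2 : Type := MvPolynomial (Fin 2) (ZMod 2)

/-- The variable `w₂`. -/
def w2 : R2 := X 0

/-- The variable `w₃`. -/
def w3 : R2 := X 1

/-- The polynomials `g_r`: `g₀ = 1`, `g₁ = 0`, `g₂ = w₂`,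
`g_{r+3} = w₂ g_{r+1} + w₃ g_r`. -/
def g : ℕ → R2
  | 0 => 1
  | 1 => 0
  | 2 => w2
  | (r+3) => w2 * g (r+1) + w3 * g r

theorem R2_add_self (a : R2) : a + a = 0 := CharTwo.add_self_eq_zero a

/-- For all `r, j ≥ 0`: `g_{r+3·2^j} = w₂^{2^j} g_{r+2^j} + w₃^{2^j} g_r`. -/
theorem g_add_three_mul_two_pow (r j : ℕ) :
    g (r + 3 * 2 ^ j) = w2 ^ (2 ^ j) * g (r + 2 ^ j) + w3 ^ (2 ^ j) * g r := by
  induction j generalizing r with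
  | zero =>
    simp only [pow_zero, pow_one, mul_one]
    rfl
  | succ j ih =>
    set N := 2 ^ j with hN
    have h1 : r + 3 * 2 ^ (j + 1) = (r + 3 * N) + 3 * N := by ring
    have h2 : (r + 3 * N) + N = (r + N) + 3 * N := by ring
    have h3 : r + 2 ^ (j + 1) = (r + N) + N := by ring
    rw [h1, ih, h2, ih, ih, h3]
    have hp : 2 ^ (j + 1) = N + N := by rw [hN]; ring
    rw [hp, pow_add, pow_add]
    have : w2 ^ N * w3 ^ N * g (r + N) + w3 ^ N * (w2 ^ N * g (r + N)) = 0 := by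
      rw [show w3 ^ N * (w2 ^ N * g (r + N)) = w2 ^ N * w3 ^ N * g (r + N) by ring]
      exact R2_add_self _
    linear_combination this

end
end

section
/- For every integer r ≥ 0, the identity w₃·g_r² = g_{2r+3} holds in R. -/
open MvPolynomial Finset

noncomputable section

lemma two_eq_zero : (2 : R2) = 0 := CharTwo.two_eq_zero

/-- For every `r ≥ 0`: `w₃ g_r² = g_{2r+3}`. -/
theorem w3_mul_g_sq (r : ℕ) : w3 * (g r) ^ 2 = g (2 * r + 3) := by
  induction r using Nat.strong_induction_on with
  | _ r ih =>
    match r with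
    | 0 => simp [g]
    | 1 => simp [g]; linear_combination (-(w2 * w3)) * two_eq_zero
    | 2 => simp [g]; linear_combination (-(w3 * w2 ^ 2)) * two_eq_zero
    | (r+3) =>
      have h1 : w3 * (g (r+1)) ^ 2 = g (2 * (r+1) + 3) := ih (r+1) (by omega)
      have h0 : w3 * (g r) ^ 2 = g (2 * r + 3) := ih r (by omega)
      have e9 : g (2 * (r+3) + 3) = w2 * g (2*r+7) + w3 * g (2*r+6) := by
        show g (2*r+6+3) = _
        rw [g]
      have e7 : g (2*r+7) = w2 * g (2*r+5) + w3 * g (2*r+4) := by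
        show g (2*r+4+3) = _
        rw [g]
      have e6 : g (2*r+6) = w2 * g (2*r+4) + w3 * g (2*r+3) := by
        show g (2*r+3+3) = _
        rw [g]
      have hg3 : g (r+3) = w2 * g (r+1) + w3 * g r := by rw [g]
      have h1' : g (2*r+5) = w3 * (g (r+1)) ^ 2 := by rw [h1]; ring_nf
      have h0' : g (2*r+3) = w3 * (g r) ^ 2 := h0.symm
      rw [e9, e7, e6, h1', h0', hg3]
      linear_combination (w2 * w3^2 * g (r+1) * g r - w2 * w3 * g (2*r+4)) * two_eq_zero

end
end

section
/- Let t ≥ 2 be an integer. Then: (a) g_{2^t−3} = 0; (b) g_{2^t+2^{t−1}−3} = w₃^{2^{t−1}−1}; (c) g_{2^t+2^{t−2}−3} = w₂^{2^{t−2}}·w₃^{2^{t−2}−1}; (d) g_{2^t+2^{t−1}+2^{t−2}−3} = w₂^{2^{t−1}}·w₃^{2^{t−2}−1}; and (e) if t ≥ 3, then g_{2^t+2^{t−1}+2^{t−3}−3} = w₂^{2^{t−1}+2^{t−3}}·w₃^{2^{t−3}−1}. -/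
open MvPolynomial Finset

noncomputable section

lemma g_add3 (r : ℕ) : g (r+3) = w2 * g (r+1) + w3 * g r := rfl

lemma g0 : g 0 = 1 := rfl
lemma g1 : g 1 = 0 := rfl
lemma g2 : g 2 = w2 := rfl
lemma g3 : g 3 = w3 := by
  rw [show (3:ℕ) = 0+3 from rfl, g_add3, g1, g0]; ring
lemma g4 : g 4 = w2 ^ 2 := by
  rw [show (4:ℕ) = 1+3 from rfl, g_add3, g2, g1]; ring
lemma g5 : g 5 = 0 := by
  rw [show (5:ℕ) = 2+3 from rfl, g_add3, g3, g2]
  linear_combination (w2 * w3) * two_eq_zero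

/-- Joint doubling identities, proved by induction. -/
lemma g_doubling (n : ℕ) :
    g (2*n+3) = w3 * g n ^ 2 ∧
    g (2*n+2) = g (n+1) ^ 2 + w2 * g n ^ 2 ∧
    g (2*(n+1)+2) = g (n+2) ^ 2 + w2 * g (n+1) ^ 2 := by
  induction n with
  | zero =>
    refine ⟨?_, ?_, ?_⟩
    · show g 3 = w3 * g 0 ^ 2
      rw [g3, g0]; ring
    · show g 2 = g 1 ^ 2 + w2 * g 0 ^ 2
      rw [g2, g1, g0]; ring
    · show g 4 = g 2 ^ 2 + w2 * g 1 ^ 2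
      rw [g4, g2, g1]; ring
  | succ n ih =>
    obtain ⟨hA, hB, hB'⟩ := ih
    have hA' : g (2*(n+1)+3) = w3 * g (n+1) ^ 2 := by
      have h : 2*(n+1)+3 = (2*n+2)+3 := by ring
      rw [h, g_add3, show 2*n+2+1 = 2*n+3 from rfl, hA, hB]
      linear_combination (w2 * w3 * g n ^ 2) * two_eq_zero
    refine ⟨hA', hB', ?_⟩
    have h : 2*(n+2)+2 = (2*n+3)+3 := by ring
    rw [h, g_add3, show 2*n+3+1 = 2*(n+1)+2 from rfl, hB', hA,
      show n+1+2 = (n)+3 from rfl, g_add3]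
    linear_combination (-(w2 * w3 * g (n+1) * g n)) * two_eq_zero

lemma gA (n : ℕ) : g (2*n+3) = w3 * g n ^ 2 := (g_doubling n).1

lemma pow2_ge (s : ℕ) : 2 ≤ 2 ^ (s+1) ∧ 4 ≤ 2 ^ (s+2) := by
  constructor
  · calc (2:ℕ) = 2^1 := rfl
    _ ≤ 2^(s+1) := Nat.pow_le_pow_right (by norm_num) (by omega)
  · calc (4:ℕ) = 2^2 := rfl
    _ ≤ 2^(s+2) := Nat.pow_le_pow_right (by norm_num) (by omega)

/-- Part (a). -/
lemma part_a (s : ℕ) : g (2 ^ (s+2) - 3) = 0 := by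
  induction s with
  | zero => show g 1 = 0; rfl
  | succ s ih =>
    have h4 := (pow2_ge s).2
    have he : 2^(s+3) = 2*2^(s+2) := by rw [pow_succ]; ring
    have hidx : 2^(s+3) - 3 = 2*(2^(s+2) - 3) + 3 := by omega
    rw [hidx, gA, ih]
    ring

/-- Part (b). -/
lemma part_b (s : ℕ) : g (2 ^ (s+2) + 2 ^ (s+1) - 3) = w3 ^ (2 ^ (s+1) - 1) := by
  induction s with
  | zero =>
    show g 3 = w3 ^ 1
    rw [g3]; ring
  | succ s ih =>
    have h2 := (pow2_ge s).1
    have h4 := (pow2_ge s).2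
    have he2 : 2^(s+2) = 2*2^(s+1) := by rw [pow_succ]; ring
    have he3 : 2^(s+3) = 2*2^(s+2) := by rw [pow_succ]; ring
    have hidx : 2^(s+3) + 2^(s+2) - 3 = 2*(2^(s+2) + 2^(s+1) - 3) + 3 := by omega
    rw [hidx, gA, ih, ← pow_mul, ← pow_succ']
    congr 1
    omega

lemma sq_tail (a b : ℕ) (hb : 1 ≤ b) :
    w3 * (w2 ^ a * w3 ^ (b-1)) ^ 2 = w2 ^ (2*a) * w3 ^ (2*b-1) := by
  rw [mul_pow, ← pow_mul, ← pow_mul,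
    show a*2 = 2*a by ring, show (b-1)*2 = (2*b-1) - 1 by omega]
  have h1 : w3 * (w2 ^ (2*a) * w3 ^ (2*b-1-1)) = w2 ^ (2*a) * (w3 ^ (2*b-1-1) * w3 ^ 1) := by
    ring
  rw [h1, ← pow_add, show 2*b-1-1+1 = 2*b-1 by omega]

/-- Part (c). -/
lemma part_c (s : ℕ) :
    g (2 ^ (s+2) + 2 ^ s - 3) = w2 ^ (2 ^ s) * w3 ^ (2 ^ s - 1) := by
  induction s with
  | zero =>
    show g 2 = w2 ^ 1 * w3 ^ 0
    rw [g2]; ring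
  | succ s ih =>
    have h4 := (pow2_ge s).2
    have h1 : 1 ≤ 2^s := Nat.one_le_two_pow
    have he3 : 2^(s+3) = 2*2^(s+2) := by rw [pow_succ]; ring
    have he1 : 2^(s+1) = 2*2^s := by rw [pow_succ]; ring
    have hidx : 2^(s+3) + 2^(s+1) - 3 = 2*(2^(s+2) + 2^s - 3) + 3 := by omega
    rw [hidx, gA, ih, sq_tail _ _ h1, ← he1]

/-- Part (d). -/
lemma part_d (s : ℕ) :
    g (2 ^ (s+2) + 2 ^ (s+1) + 2 ^ s - 3) = w2 ^ (2 ^ (s+1)) * w3 ^ (2 ^ s - 1) := by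
  induction s with
  | zero =>
    show g 4 = w2 ^ 2 * w3 ^ 0
    rw [g4]; ring
  | succ s ih =>
    have h2 := (pow2_ge s).1
    have h4 := (pow2_ge s).2
    have h1 : 1 ≤ 2^s := Nat.one_le_two_pow
    have he3 : 2^(s+3) = 2*2^(s+2) := by rw [pow_succ]; ring
    have he2 : 2^(s+2) = 2*2^(s+1) := by rw [pow_succ]; ring
    have he1 : 2^(s+1) = 2*2^s := by rw [pow_succ]; ring
    have hidx : 2^(s+3) + 2^(s+2) + 2^(s+1) - 3
        = 2*(2^(s+2) + 2^(s+1) + 2^s - 3) + 3 := by omega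
    rw [hidx, gA, ih, sq_tail _ _ h1, ← he2, ← he1]

/-- Part (e). -/
lemma part_e (s : ℕ) :
    g (2 ^ (s+3) + 2 ^ (s+2) + 2 ^ s - 3)
      = w2 ^ (2 ^ (s+2) + 2 ^ s) * w3 ^ (2 ^ s - 1) := by
  induction s with
  | zero =>
    show g 10 = w2 ^ 5 * w3 ^ 0
    have h10 : g 10 = g 5 ^ 2 + w2 * g 4 ^ 2 := (g_doubling 4).2.1
    rw [h10, g5, g4]; ring
  | succ s ih =>
    have h4 := (pow2_ge (s+1)).2
    have h44 := (pow2_ge s).2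
    have h1 : 1 ≤ 2^s := Nat.one_le_two_pow
    have he4 : 2^(s+4) = 2*2^(s+3) := by rw [pow_succ]; ring
    have he3 : 2^(s+3) = 2*2^(s+2) := by rw [pow_succ]; ring
    have he1 : 2^(s+1) = 2*2^s := by rw [pow_succ]; ring
    have hidx : 2^(s+4) + 2^(s+3) + 2^(s+1) - 3
        = 2*(2^(s+3) + 2^(s+2) + 2^s - 3) + 3 := by omega
    rw [hidx, gA, ih, sq_tail _ _ h1, ← he1,
      show 2*(2^(s+2) + 2^s) = 2^(s+3) + 2^(s+1) by omega]

/-- Values of some particular polynomials `g_r` (Proposition 2.2). -/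
theorem g_special_values (t : ℕ) (ht : 2 ≤ t) :
    g (2 ^ t - 3) = 0 ∧
    g (2 ^ t + 2 ^ (t - 1) - 3) = w3 ^ (2 ^ (t - 1) - 1) ∧
    g (2 ^ t + 2 ^ (t - 2) - 3) = w2 ^ (2 ^ (t - 2)) * w3 ^ (2 ^ (t - 2) - 1) ∧
    g (2 ^ t + 2 ^ (t - 1) + 2 ^ (t - 2) - 3) = w2 ^ (2 ^ (t - 1)) * w3 ^ (2 ^ (t - 2) - 1) ∧
    (3 ≤ t →
      g (2 ^ t + 2 ^ (t - 1) + 2 ^ (t - 3) - 3)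
        = w2 ^ (2 ^ (t - 1) + 2 ^ (t - 3)) * w3 ^ (2 ^ (t - 3) - 1)) := by
  obtain ⟨s, rfl⟩ : ∃ s, t = s + 2 := ⟨t - 2, by omega⟩
  have h1 : s + 2 - 1 = s + 1 := by omega
  have h2 : s + 2 - 2 = s := by omega
  rw [h1, h2]
  refine ⟨part_a s, part_b s, part_c s, part_d s, fun h3 => ?_⟩
  obtain ⟨u, rfl⟩ : ∃ u, s = u + 1 := ⟨s - 1, by omega⟩
  rw [show u+1+2 = u+3 by omega, show u+1+1 = u+2 by omega, show u+3-3 = u by omega]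
  exact part_e u
end
end

section
/- Let i and l be nonnegative integers. Then g_{2^i·(2l+3)−3} ≠ 0, and LM(g_{2^i·(2l+3)−3}) = w₂^{2^i·l}·w₃^{2^i−1}; that is, the monomial w₂^{2^i·l}·w₃^{2^i−1} appears in g_{2^i·(2l+3)−3} with coefficient 1, and every monomial w₂^b·w₃^c appearing in g_{2^i·(2l+3)−3} with nonzero coefficient satisfies w₂^b w₃^c ⪯ w₂^{2^i·l}·w₃^{2^i−1}. -/
open MvPolynomial Finset

noncomputable section

/-- The coefficient of the monomial `w₂^b * w₃^c` in `p`. -/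
def mcoeff (b c : ℕ) (p : R2) : ZMod 2 :=
  MvPolynomial.coeff (Finsupp.single 0 b + Finsupp.single 1 c) p

/-- `IsLM p b c`: the monomial `w₂^b * w₃^c` is the leading monomial of `p`
with respect to the lexicographic monomial order with `w₃ ≺ w₂`, i.e. it appears
in `p` with coefficient `1` and every monomial `w₂^{b'} w₃^{c'}` appearing in `p`
with nonzero coefficient satisfies `w₂^{b'} w₃^{c'} ⪯ w₂^b w₃^c`. -/
def IsLM (p : R2) (b c : ℕ) : Prop :=
  mcoeff b c p = 1 ∧ ∀ b' c', mcoeff b' c' p ≠ 0 → b' < b ∨ (b' = b ∧ c' ≤ c)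

lemma mono_apply0 (b c : ℕ) :
    ((Finsupp.single (0 : Fin 2) b + Finsupp.single 1 c : Fin 2 →₀ ℕ)) 0 = b := by simp

lemma mono_apply1 (b c : ℕ) :
    ((Finsupp.single (0 : Fin 2) b + Finsupp.single 1 c : Fin 2 →₀ ℕ)) 1 = c := by
  simp [Finsupp.single_apply]

lemma mono_eq {b c b' c' : ℕ}
    (h : (Finsupp.single (0 : Fin 2) b + Finsupp.single 1 c : Fin 2 →₀ ℕ)
       = Finsupp.single 0 b' + Finsupp.single 1 c') :
    b = b' ∧ c = c' := by
  constructor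
  · have := congrArg (fun f => f 0) h; simpa [mono_apply0] using this
  · have := congrArg (fun f => f 1) h; simpa [mono_apply1] using this

lemma mcoeff_add (b c : ℕ) (p q : R2) : mcoeff b c (p+q) = mcoeff b c p + mcoeff b c q :=
  coeff_add _ _ _

lemma mcoeff_w2_mul (b c : ℕ) (p : R2) : mcoeff (b+1) c (w2 * p) = mcoeff b c p := by
  unfold mcoeff w2
  have : (Finsupp.single (0:Fin 2) (b+1) + Finsupp.single 1 c)
      = Finsupp.single 0 1 + (Finsupp.single 0 b + Finsupp.single 1 c) := by
    rw [← add_assoc, ← Finsupp.single_add, add_comm 1 b]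
  rw [this, coeff_X_mul]

lemma mcoeff_w3_mul (b c : ℕ) (p : R2) : mcoeff b (c+1) (w3 * p) = mcoeff b c p := by
  unfold mcoeff w3
  have : (Finsupp.single (0:Fin 2) b + Finsupp.single 1 (c+1))
      = Finsupp.single 1 1 + (Finsupp.single 0 b + Finsupp.single 1 c) := by
    rw [Finsupp.single_add]; abel
  rw [this, coeff_X_mul]

lemma mcoeff_w2_mul_zero (c : ℕ) (p : R2) : mcoeff 0 c (w2 * p) = 0 := by
  unfold mcoeff w2
  rw [coeff_X_mul', if_neg]
  simp [Finsupp.mem_support_iff, mono_apply0]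

lemma mcoeff_w3_mul_zero (b : ℕ) (p : R2) : mcoeff b 0 (w3 * p) = 0 := by
  unfold mcoeff w3
  rw [coeff_X_mul', if_neg]
  exact fun h => absurd (Finsupp.mem_support_iff.mp h) (by simp [mono_apply1])

lemma coeff_sq_smul (m : Fin 2 →₀ ℕ) (p : R2) : coeff (2 • m) (p^2) = coeff m p := by
  induction p using MvPolynomial.induction_on' with
  | monomial u a =>
    rw [monomial_pow]
    rw [coeff_monomial, coeff_monomial]
    by_cases h : u = m
    · subst h; rw [if_pos rfl, if_pos rfl]; exact ZMod.pow_card a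
    · rw [if_neg, if_neg h]
      intro hc
      exact h (by ext x; have := DFunLike.congr_fun hc x; simpa using this)
  | add p q hp hq =>
    rw [add_pow_char, coeff_add, coeff_add, hp, hq]

lemma coeff_sq_not (n : Fin 2 →₀ ℕ) (p : R2) (h : ∀ m, n ≠ 2 • m) : coeff n (p^2) = 0 := by
  induction p using MvPolynomial.induction_on' with
  | monomial u a =>
    rw [monomial_pow, coeff_monomial, if_neg]
    intro hc; exact h u hc.symm
  | add p q hp hq =>
    rw [add_pow_char, coeff_add, hp, hq, add_zero]

lemma mcoeff_sq (b c : ℕ) (p : R2) : mcoeff (2*b) (2*c) (p^2) = mcoeff b c p := by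
  unfold mcoeff
  have : (Finsupp.single (0:Fin 2) (2*b) + Finsupp.single 1 (2*c))
      = 2 • (Finsupp.single 0 b + Finsupp.single 1 c) := by
    rw [smul_add, Finsupp.smul_single, Finsupp.smul_single]; rfl
  rw [this, coeff_sq_smul]

lemma mcoeff_sq_zero (b c : ℕ) (p : R2) (h : b % 2 = 1 ∨ c % 2 = 1) :
    mcoeff b c (p^2) = 0 := by
  unfold mcoeff
  apply coeff_sq_not
  intro m hm
  have h0 := congrArg (fun f => f 0) hm
  have h1 := congrArg (fun f => f 1) hm
  simp only [mono_apply0, mono_apply1, Finsupp.smul_apply, smul_eq_mul] at h0 h1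
  omega

/-- Degree constraint: every monomial of `g r` satisfies `2b + 3c = r`. -/
lemma gdeg : ∀ r b c, mcoeff b c (g r) ≠ 0 → 2*b + 3*c = r := by
  intro r
  induction r using Nat.strong_induction_on with
  | _ r ih =>
    cases r with
    | zero =>
      intro b c h
      unfold g mcoeff at h
      rw [coeff_one] at h
      split_ifs at h with hc
      · have hc' : (Finsupp.single (0:Fin 2) b + Finsupp.single 1 c : Fin 2 →₀ ℕ)
            = Finsupp.single 0 0 + Finsupp.single 1 0 := by rw [← hc]; simp
        obtain ⟨hb, hcc⟩ := mono_eq hc'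
        omega
      · exact absurd rfl h
    | succ r => cases r with
      | zero =>
        intro b c h
        unfold g mcoeff at h
        simp at h
      | succ r => cases r with
        | zero =>
          intro b c h
          unfold g mcoeff w2 at h
          rw [coeff_X'] at h
          split_ifs at h with hc
          · have hc' : (Finsupp.single (0:Fin 2) b + Finsupp.single 1 c : Fin 2 →₀ ℕ)
                = Finsupp.single 0 1 + Finsupp.single 1 0 := by rw [← hc]; simp
            obtain ⟨hb, hcc⟩ := mono_eq hc'
            omega
          · exact absurd rfl h
        | succ r =>
          intro b c h
          rw [show r+1+1+1 = r+3 from rfl, g_add3, mcoeff_add] at h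
          have h2 : mcoeff b c (w2 * g (r+1)) ≠ 0 ∨ mcoeff b c (w3 * g r) ≠ 0 := by
            by_contra hc
            push_neg at hc
            rw [hc.1, hc.2, add_zero] at h
            exact h rfl
          rcases h2 with h2 | h2
          · cases b with
            | zero => exact absurd (mcoeff_w2_mul_zero c _) h2
            | succ b =>
              rw [mcoeff_w2_mul] at h2
              have := ih (r+1) (by omega) b c h2
              omega
          · cases c with
            | zero => exact absurd (mcoeff_w3_mul_zero b _) h2
            | succ c =>
              rw [mcoeff_w3_mul] at h2
              have := ih r (by omega) b c h2
              omega

/-- Leading coefficient of `g (2l)`. -/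
lemma gcoeff : ∀ l, mcoeff l 0 (g (2*l)) = 1 := by
  intro l
  induction l using Nat.strong_induction_on with
  | _ l ih =>
    cases l with
    | zero =>
      unfold g mcoeff
      simp [coeff_one]
    | succ l => cases l with
      | zero =>
        show mcoeff 1 0 (g 2) = 1
        unfold g mcoeff w2
        rw [coeff_X']
        rw [if_pos]
        simp
      | succ l =>
        have e : 2*(l+1+1) = (2*l+1)+3 := by omega
        rw [e, g_add3, mcoeff_add]
        rw [show l+1+1 = (l+1)+1 from rfl, mcoeff_w2_mul, mcoeff_w3_mul_zero, add_zero]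
        rw [show 2*l+1+1 = 2*(l+1) from by omega]
        exact ih (l+1) (by omega)

/-- The key doubling identities. -/
lemma gAB : ∀ k, (g (2*k+2) = g (k+1)^2 + w2 * g k ^2) ∧ (g (2*k+3) = w3 * g k ^2) := by
  intro k
  induction k using Nat.strong_induction_on with
  | _ k ih =>
    cases k with
    | zero =>
      constructor
      · show g 2 = g 1 ^2 + w2 * g 0 ^2
        unfold g; ring
      · show g 3 = w3 * g 0 ^2
        rw [show (3:ℕ) = 0+3 from rfl, g_add3]
        show w2 * g 1 + w3 * g 0 = w3 * g 0 ^2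
        unfold g; ring
    | succ k => cases k with
      | zero =>
        constructor
        · show g 4 = g 2 ^2 + w2 * g 1 ^2
          have h4 : g 4 = w2 * g 2 + w3 * g 1 := g_add3 1
          rw [h4]
          unfold g; ring
        · show g 5 = w3 * g 1 ^2
          have h5 : g 5 = w2 * g 3 + w3 * g 2 := g_add3 2
          have h3 : g 3 = w2 * g 1 + w3 * g 0 := g_add3 0
          rw [h5, h3]
          unfold g
          rw [mul_zero, zero_add, mul_one]
          rw [show (0:R2)^2 = 0 from by ring, mul_zero, ← mul_comm w3 w2]
          exact CharTwo.add_self_eq_zero _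
      | succ k =>
        have hA1 : g (2*(k+1)+2) = g (k+2)^2 + w2 * g (k+1) ^2 := (ih (k+1) (by omega)).1
        have hB1 : g (2*(k+1)+3) = w3 * g (k+1) ^2 := (ih (k+1) (by omega)).2
        have hB0 : g (2*k+3) = w3 * g k ^2 := (ih k (by omega)).2
        constructor
        · -- g (2(k+2)+2) = g(k+3)^2 + w2 * g(k+2)^2
          have e : 2*(k+1+1)+2 = (2*k+3)+3 := by omega
          rw [e, g_add3]
          rw [show 2*k+3+1 = 2*(k+1)+2 from by omega, hA1, hB0]
          rw [show k+1+1+1 = k+3 from rfl, show k+1+1 = k+2 from rfl]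
          rw [show (k+3) = k+3 from rfl, show g (k+3) = w2 * g (k+1) + w3 * g k from g_add3 k]
          rw [add_pow_char, mul_pow, mul_pow]
          ring
        · -- g (2(k+2)+3) = w3 * g(k+2)^2
          have e : 2*(k+1+1)+3 = (2*(k+1)+2)+3 := by omega
          rw [e, g_add3]
          rw [show 2*(k+1)+2+1 = 2*(k+1)+3 from rfl, hB1, hA1]
          rw [show k+1+1 = k+2 from rfl]
          have : w2 * (w3 * g (k+1) ^ 2) + w3 * (g (k+2) ^ 2 + w2 * g (k+1) ^ 2)
              = w3 * g (k+2)^2 + (w2 * w3 * g (k+1)^2 + w2 * w3 * g (k+1)^2) := by ring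
          rw [this, CharTwo.add_self_eq_zero, add_zero]

lemma gB (k : ℕ) : g (2*k+3) = w3 * g k ^2 := (gAB k).2

lemma IsLM_w3 {p : R2} {b c : ℕ} (h : IsLM p b c) : IsLM (w3 * p) b (c+1) := by
  obtain ⟨h1, h2⟩ := h
  constructor
  · rw [mcoeff_w3_mul]; exact h1
  · intro b' c' hc
    cases c' with
    | zero => exact absurd (mcoeff_w3_mul_zero b' p) hc
    | succ c' =>
      rw [mcoeff_w3_mul] at hc
      rcases h2 b' c' hc with h | ⟨h, h'⟩
      · exact Or.inl h
      · exact Or.inr ⟨h, by omega⟩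

lemma IsLM_sq {p : R2} {b c : ℕ} (h : IsLM p b c) : IsLM (p^2) (2*b) (2*c) := by
  obtain ⟨h1, h2⟩ := h
  constructor
  · rw [mcoeff_sq]; exact h1
  · intro b' c' hc
    by_cases hb : b' % 2 = 1
    · exact absurd (mcoeff_sq_zero _ _ _ (Or.inl hb)) hc
    by_cases hcc : c' % 2 = 1
    · exact absurd (mcoeff_sq_zero _ _ _ (Or.inr hcc)) hc
    rw [show b' = 2*(b'/2) from by omega, show c' = 2*(c'/2) from by omega,
      mcoeff_sq] at hc
    rcases h2 _ _ hc with h | ⟨h, h'⟩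
    · left; omega
    · right; omega

lemma IsLM_ne_zero {p : R2} {b c : ℕ} (h : IsLM p b c) : p ≠ 0 := by
  intro h0
  have := h.1
  rw [h0] at this
  unfold mcoeff at this
  rw [coeff_zero] at this
  exact one_ne_zero this.symm

lemma base_case (l : ℕ) : IsLM (g (2*l)) l 0 := by
  constructor
  · exact gcoeff l
  · intro b' c' h
    have := gdeg (2*l) b' c' h
    omega

/-- For `i, l ≥ 0` the polynomial `g_{2^i(2l+3)-3}` is nonzero and its leading
monomial (lexicographic order with `w₃ ≺ w₂`) is `w₂^{2^i l} w₃^{2^i - 1}`. -/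
theorem g_leading_monomial (i l : ℕ) :
    g (2 ^ i * (2 * l + 3) - 3) ≠ 0 ∧
    IsLM (g (2 ^ i * (2 * l + 3) - 3)) (2 ^ i * l) (2 ^ i - 1) := by
  induction i with
  | zero =>
    rw [show 2^0*(2*l+3)-3 = 2*l from by omega, show 2^0*l = l from by omega,
      show 2^0-1 = 0 from rfl]
    exact ⟨IsLM_ne_zero (base_case l), base_case l⟩
  | succ i ih =>
    obtain ⟨hne, hlm⟩ := ih
    have hx : 1 ≤ 2^i := Nat.one_le_two_pow
    have hy : 3 ≤ 2^i*(2*l+3) := by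
      calc 3 ≤ 1*(2*l+3) := by omega
        _ ≤ 2^i*(2*l+3) := Nat.mul_le_mul_right _ hx
    have e2 : 2^(i+1)*(2*l+3) = 2*(2^i*(2*l+3)) := by ring
    have e1 : 2^(i+1)*(2*l+3)-3 = 2*(2^i*(2*l+3)-3)+3 := by omega
    have el : 2^(i+1)*l = 2*(2^i*l) := by ring
    have ec : 2^(i+1)-1 = 2*(2^i-1)+1 := by
      have : 2^(i+1) = 2*2^i := by ring
      omega
    rw [e1, gB, el, ec]
    have h2 := IsLM_w3 (IsLM_sq hlm)
    exact ⟨IsLM_ne_zero h2, h2⟩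

end
end
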